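/- Let Ω ⊆ [0,1) be the irrationals, M a finite set, and T̃(x, M) = (Tx, f_{a₁(x)}(M)) a skew product over the Gauss map T, where f_a : M → M for each a ∈ ℕ and a₁(x) is the first partial quotient of x. Suppose T̃ is transitive (for any M₁, M₂ ∈ M there is a string s of positive integers of some length n with T̃^n(C_s × {M₁}) = Ω × {M₂}). Then there exists a 'traversing string' s = [c₁, …, c_n]: for every M₁, M₂ ∈ M there exists i < n such that T̃^i(C_s × {M₁}) ⊆ Ω × {M₂}. -/

import Mathlib

open MeasureTheory Filter

/-- The Gauss map `T(x) = 1/x - ⌊1/x⌋` (with `T 0 = 0`). -/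
noncomputable def gauss (x : ℝ) : ℝ := if x = 0 then 0 else x⁻¹ - ⌊x⁻¹⌋

/-- `cfDigit x i` is the continued fraction partial quotient `a_{i+1}(x)`
of `x ∈ [0,1)`, namely `⌊1 / T^i x⌋`. -/
noncomputable def cfDigit (x : ℝ) (i : ℕ) : ℤ := ⌊(gauss^[i] x)⁻¹⌋

/-- The continued fraction cylinder set of the string `s = [c₁,…,c_n]`. -/
def cyl (s : List ℤ) : Set ℝ :=
  {x | x ∈ Set.Ico (0 : ℝ) 1 ∧ ∀ i < s.length, cfDigit x i = s.getD i 0}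

/-- The set of irrational points of `[0,1)`. -/
def Omega : Set ℝ := {x | x ∈ Set.Ico (0 : ℝ) 1 ∧ Irrational x}

/-!
Since the fibre coordinate of `T̃ⁿ` is constant on a rank-`n` cylinder, transitivity says that
for every pair `(m₁, m₂)` the cocycle `m ↦ f_{c_n} (⋯ (f_{c_1} m))` along some string carries
`m₁` to `m₂`. Listing all pairs and appending, for each one, a string that steers the state
reached so far to its target, we obtain one string whose prefixes steer every `m₁` to every
`m₂`; on its cylinder, `T̃ⁱ` for the matching prefix length `i` lands in `Ω × {m₂}`.
-/

lemma gauss_eq_fract {x : ℝ} (hx : x ≠ 0) : gauss x = Int.fract x⁻¹ := if_neg hx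

lemma gauss_mem_Ico (x : ℝ) : gauss x ∈ Set.Ico (0 : ℝ) 1 := by
  rcases eq_or_ne x 0 with rfl | hx
  · simp [gauss]
  · rw [gauss_eq_fract hx]
    exact ⟨Int.fract_nonneg _, Int.fract_lt_one _⟩

lemma mapsTo_gauss_Omega : Set.MapsTo gauss Omega Omega := by
  rintro x ⟨-, hirr⟩
  refine ⟨gauss_mem_Ico x, ?_⟩
  rw [gauss_eq_fract hirr.ne_zero]
  exact hirr.inv.sub_intCast _

lemma Omega_nonempty : Omega.Nonempty := by
  refine ⟨Real.sqrt 2 - 1, ⟨?_, ?_⟩, by simpa using irrational_sqrt_two.sub_intCast 1⟩ <;>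
    nlinarith [Real.sq_sqrt (show (0 : ℝ) ≤ 2 by norm_num), Real.sqrt_nonneg 2]

lemma cfDigit_gauss (x : ℝ) (j : ℕ) : cfDigit (gauss x) j = cfDigit x (j + 1) := by
  simp only [cfDigit, Function.iterate_succ_apply]

lemma mem_cyl_cons {x : ℝ} {c : ℤ} {t : List ℤ} :
    x ∈ cyl (c :: t) ↔ x ∈ Set.Ico (0 : ℝ) 1 ∧ cfDigit x 0 = c ∧ gauss x ∈ cyl t := by
  simp only [cyl, Set.mem_ofPred_eq, List.length_cons, Nat.forall_lt_succ_left,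
    List.getD_cons_zero, List.getD_cons_succ, cfDigit_gauss, gauss_mem_Ico, true_and]

lemma cyl_subset_cyl_take (s : List ℤ) (i : ℕ) : cyl s ⊆ cyl (s.take i) := by
  rintro x ⟨hx, hdigits⟩
  refine ⟨hx, fun j hj => ?_⟩
  rw [List.length_take, lt_min_iff] at hj
  rw [hdigits j (by omega)]
  simp [List.getD_eq_getElem?_getD, hj.1]

noncomputable def gaussSkew {M : Type*} (f : ℤ → M → M) (p : ℝ × M) : ℝ × M :=
  (gauss p.1, f (cfDigit p.1 0) p.2)

section gaussSkew

variable {M : Type*} (f : ℤ → M → M)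

lemma iterate_gaussSkew_of_mem_cyl {s : List ℤ} {x : ℝ} (hx : x ∈ cyl s) (m : M) :
    (gaussSkew f)^[s.length] (x, m) = (gauss^[s.length] x, s.foldl (flip f) m) := by
  induction s generalizing x m with
  | nil => rfl
  | cons c t ih =>
    obtain ⟨-, rfl, hgx⟩ := mem_cyl_cons.1 hx
    exact ih hgx _

lemma image_iterate_gaussSkew_subset (s : List ℤ) (m : M) :
    (gaussSkew f)^[s.length] '' ((Omega ∩ cyl s) ×ˢ {m}) ⊆
      Omega ×ˢ {s.foldl (flip f) m} := by
  rintro _ ⟨⟨x, m'⟩, ⟨⟨hxΩ, hxs⟩, rfl : m' = m⟩, rfl⟩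
  rw [iterate_gaussSkew_of_mem_cyl f hxs]
  exact ⟨mapsTo_gauss_Omega.iterate _ hxΩ, rfl⟩

lemma foldl_eq_of_image_iterate_gaussSkew_eq {s : List ℤ} {m₁ m₂ : M}
    (h : (gaussSkew f)^[s.length] '' ((Omega ∩ cyl s) ×ˢ {m₁}) = Omega ×ˢ {m₂}) :
    s.foldl (flip f) m₁ = m₂ := by
  obtain ⟨x, hx⟩ := Omega_nonempty
  have hmem : (x, m₂) ∈ (gaussSkew f)^[s.length] '' ((Omega ∩ cyl s) ×ˢ {m₁}) :=
    h ▸ ⟨hx, rfl⟩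
  exact (image_iterate_gaussSkew_subset f s m₁ hmem).2.symm

end gaussSkew

section visiting

variable {α β : Type*} {p : α → Prop} {g : β → α → β}

lemma exists_forall_mem_foldl_take_eq
    (h : ∀ b₁ b₂, ∃ t : List α, (∀ a ∈ t, p a) ∧ t.foldl g b₁ = b₂) (L : List (β × β)) :
    ∃ s : List α, (∀ a ∈ s, p a) ∧
      ∀ q ∈ L, ∃ i ≤ s.length, (s.take i).foldl g q.1 = q.2 := by
  induction L with
  | nil => exact ⟨[], by simp⟩
  | cons q L ih =>
    obtain ⟨s, hs, hL⟩ := ih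
    obtain ⟨t, ht, hq⟩ := h (s.foldl g q.1) q.2
    refine ⟨s ++ t, List.forall_mem_append.2 ⟨hs, ht⟩, ?_⟩
    rintro q' (_ | ⟨_, hq'⟩)
    · exact ⟨(s ++ t).length, le_rfl, by rw [List.take_length, List.foldl_append, hq]⟩
    · obtain ⟨i, hi, hfold⟩ := hL q' hq'
      exact ⟨i, hi.trans (by simp), by rwa [List.take_append_of_le_length hi]⟩

lemma exists_forall_foldl_take_eq [Finite β]
    (h : ∀ b₁ b₂, ∃ t : List α, (∀ a ∈ t, p a) ∧ t.foldl g b₁ = b₂) :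
    ∃ s : List α, (∀ a ∈ s, p a) ∧ ∀ b₁ b₂, ∃ i ≤ s.length, (s.take i).foldl g b₁ = b₂ := by
  obtain ⟨L, -, hL⟩ := Finite.exists_univ_list (β × β)
  obtain ⟨s, hs, hsL⟩ := exists_forall_mem_foldl_take_eq h L
  exact ⟨s, hs, fun b₁ b₂ => hsL (b₁, b₂) (hL _)⟩

end visiting

theorem exists_traversing_string_general (M : Type*) [Fintype M]
    (f : ℤ → M → M) (Tt : ℝ × M → ℝ × M)
    (hTt : Tt = fun p => (gauss p.1, f (cfDigit p.1 0) p.2))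
    (htrans : ∀ m₁ m₂ : M, ∃ s : List ℤ, (∀ c ∈ s, 0 < c) ∧
      Tt^[s.length] '' ((Omega ∩ cyl s) ×ˢ ({m₁} : Set M)) = Omega ×ˢ ({m₂} : Set M)) :
    ∃ s : List ℤ, (∀ c ∈ s, 0 < c) ∧ ∀ m₁ m₂ : M, ∃ i < s.length,
      Tt^[i] '' ((Omega ∩ cyl s) ×ˢ ({m₁} : Set M)) ⊆ Omega ×ˢ ({m₂} : Set M) := by
  obtain rfl : Tt = gaussSkew f := hTt
  have hsteer : ∀ m₁ m₂, ∃ t : List ℤ, (∀ c ∈ t, 0 < c) ∧ t.foldl (flip f) m₁ = m₂ := by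
    intro m₁ m₂
    obtain ⟨t, ht, himg⟩ := htrans m₁ m₂
    exact ⟨t, ht, foldl_eq_of_image_iterate_gaussSkew_eq f himg⟩
  obtain ⟨s, hs, hsteer_take⟩ := exists_forall_foldl_take_eq hsteer
  -- the padding letter makes every prefix length `i ≤ |s|` a strict one
  refine ⟨s ++ [1], List.forall_mem_append.2 ⟨hs, by simp⟩, fun m₁ m₂ => ?_⟩
  obtain ⟨i, hi, hfold⟩ := hsteer_take m₁ m₂
  have htake : (s ++ [1]).take i = s.take i := List.take_append_of_le_length hi
  refine ⟨i, by simpa using Nat.lt_succ_of_le hi, ?_⟩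
  calc (gaussSkew f)^[i] '' ((Omega ∩ cyl (s ++ [1])) ×ˢ {m₁})
      ⊆ (gaussSkew f)^[(s.take i).length] '' ((Omega ∩ cyl (s.take i)) ×ˢ {m₁}) := by
        rw [List.length_take_of_le hi, ← htake]
        gcongr
        exact cyl_subset_cyl_take _ _
    _ ⊆ Omega ×ˢ {m₂} := hfold ▸ image_iterate_gaussSkew_subset f _ m₁

/-- Existence of a traversing string: if the skew product
`T̃(x, m) = (Tx, f_{a₁(x)}(m))` over the Gauss map (with `M` finite) is transitive,
then there is a string `s` such that for every `m₁, m₂ ∈ M` there is `i < |s|` with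
`T̃^i(C_s × {m₁}) ⊆ Ω × {m₂}`. -/
theorem exists_traversing_string (M : Type*) [Fintype M] [Nonempty M]
    (f : ℤ → M → M) (Tt : ℝ × M → ℝ × M)
    (hTt : Tt = fun p => (gauss p.1, f (cfDigit p.1 0) p.2))
    (htrans : ∀ m₁ m₂ : M, ∃ s : List ℤ, (∀ c ∈ s, 0 < c) ∧
      Tt^[s.length] '' ((Omega ∩ cyl s) ×ˢ ({m₁} : Set M)) = Omega ×ˢ ({m₂} : Set M)) :
    ∃ s : List ℤ, (∀ c ∈ s, 0 < c) ∧ ∀ m₁ m₂ : M, ∃ i < s.length,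
      Tt^[i] '' ((Omega ∩ cyl s) ×ˢ ({m₁} : Set M)) ⊆ Omega ×ˢ ({m₂} : Set M) :=
  exists_traversing_string_general M f Tt hTt htrans
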